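/- For every real number κ ≥ 10 and every integer N ≥ 2, one has (1 - (2/N)·(1 + √(1 + κ/N))⁻¹)^N < 1 - 2·(1 + √(1 + κ))⁻¹. -/

import Mathlib

/-! Write `t = √(1 + κ/N)`, `s = √(1 + κ)` and `a = 2 / (N (1 + t))`. The second-order
Bonferroni bound `(1 - a)^N ≤ 1 - N a + N(N-1)/2 · a²` reduces the claim to
`N (1 + t)² < (1 + s)(N t + 1)`. Since `s² = 1 + N (t² - 1)`, multiplying the difference by
`s - 1` gives `N (s - t)(t s - 2 t - 1)`, which is positive as soon as `t > 1` and `s > 3`,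
i.e. `κ > 8`. -/

theorem one_sub_pow_le_one_sub_mul_add_sq {a : ℝ} (ha₀ : 0 ≤ a) (ha₁ : a ≤ 1) (n : ℕ) :
    (1 - a) ^ n ≤ 1 - n * a + n * (n - 1) / 2 * a ^ 2 := by
  induction n with
  | zero => simp
  | succ n ih =>
    calc (1 - a) ^ (n + 1) = (1 - a) ^ n * (1 - a) := pow_succ _ _
      _ ≤ (1 - n * a + n * (n - 1) / 2 * a ^ 2) * (1 - a) :=
        mul_le_mul_of_nonneg_right ih (by linarith)
      _ = 1 - (n + 1 : ℕ) * a + (n + 1 : ℕ) * ((n + 1 : ℕ) - 1) / 2 * a ^ 2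
            - n * (n - 1) / 2 * a ^ 3 := by push_cast; ring
      _ ≤ 1 - (n + 1 : ℕ) * a + (n + 1 : ℕ) * ((n + 1 : ℕ) - 1) / 2 * a ^ 2 := by
        have : 0 ≤ n * (n - 1) / 2 * a ^ 3 := by
          rcases n with _ | n
          · simp
          · push_cast
            rw [add_sub_cancel_right]
            positivity
        linarith

theorem mul_one_add_sq_lt_one_add_mul_mul_add_one {n t s : ℝ} (hn : 1 < n) (ht : 1 < t)
    (hs : 3 < s) (hst : s ^ 2 = 1 + n * (t ^ 2 - 1)) :
    n * (1 + t) ^ 2 < (1 + s) * (n * t + 1) := by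
  have hts : t < s := by
    nlinarith [mul_pos (sub_pos.mpr hn) (sub_pos.mpr (one_lt_pow₀ ht two_ne_zero))]
  have hfactor : 0 < t * s - 2 * t - 1 := by nlinarith
  have hprod : 0 < (s - 1) * ((1 + s) * (n * t + 1) - n * (1 + t) ^ 2) := by
    have hid : (s - 1) * ((1 + s) * (n * t + 1) - n * (1 + t) ^ 2)
        = n * ((s - t) * (t * s - 2 * t - 1)) := by linear_combination hst
    rw [hid]
    exact mul_pos (by linarith) (mul_pos (by linarith) hfactor)
  linarith [(pos_iff_pos_of_mul_pos hprod).mp (by linarith)]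

theorem spdhg_rate_beats_pdhg_rate (κ : ℝ) (hκ : 10 ≤ κ) (N : ℕ) (hN : 2 ≤ N) :
    (1 - (2 / (N : ℝ)) * (1 + Real.sqrt (1 + κ / N))⁻¹) ^ N
      < 1 - 2 * (1 + Real.sqrt (1 + κ))⁻¹ := by
  set t := Real.sqrt (1 + κ / N)
  set s := Real.sqrt (1 + κ)
  have hN' : (2 : ℝ) ≤ N := by exact_mod_cast hN
  have ht : 1 < t := Real.lt_sqrt_of_sq_lt (by simp; positivity)
  have hs : 3 < s := Real.lt_sqrt_of_sq_lt (by linarith)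
  have hst : s ^ 2 = 1 + N * (t ^ 2 - 1) := by
    rw [Real.sq_sqrt (by positivity), Real.sq_sqrt (by positivity)]
    field_simp
    ring
  have hkey := mul_one_add_sq_lt_one_add_mul_mul_add_one (by linarith) ht hs hst
  have ha₁ : 2 / (N : ℝ) * (1 + t)⁻¹ ≤ 1 :=
    mul_le_one₀ ((div_le_one (by positivity)).mpr hN') (by positivity)
      (inv_le_one_of_one_le₀ (by linarith))
  calc (1 - 2 / (N : ℝ) * (1 + t)⁻¹) ^ N
      ≤ 1 - N * (2 / N * (1 + t)⁻¹) + N * (N - 1) / 2 * (2 / N * (1 + t)⁻¹) ^ 2 :=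
        one_sub_pow_le_one_sub_mul_add_sq (by positivity) ha₁ N
    _ = 1 - 2 * (N * t + 1) / (N * (1 + t) ^ 2) := by field_simp; ring
    _ < 1 - 2 * (1 + s)⁻¹ := by
        rw [← div_eq_mul_inv, sub_lt_sub_iff_left, div_lt_div_iff₀ (by positivity) (by positivity)]
        linarith
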